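/- For every end component (R^c, B^c) of the collapsed MDP M^c with s_+, s_- ∉ R^c, the pair (R, B) with R = states(R^c) and B = B^c ∪ ⋃_{s_{(R_i,B_i)} ∈ R^c} B_i is an end component of the original MDP M. -/

import Mathlib

open Finset
open scoped Classical

/-- A finite MDP with per-state disjoint action sets: `stOf` assigns to every
action the unique state at which it is available. -/
structure MDP (S A : Type) [Fintype S] [DecidableEq S] [Fintype A] [DecidableEq A] where
  act : S → Finset A
  act_ne : ∀ s, (act s).Nonempty
  stOf : A → S
  stOf_spec : ∀ s a, a ∈ act s → stOf a = s
  P : S → A → S → ℝ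
  P_nonneg : ∀ s a s', 0 ≤ P s a s'
  P_sum : ∀ s, ∀ a ∈ act s, ∑ s', P s a s' = 1

/-- A finite path of length `N`: states `st 0, …, st N` and actions
`ac 0, …, ac (N−1)`, each action available and each transition of positive
probability. -/
def IsPath {σ α : Type*} (act : σ → Finset α) (P : σ → α → σ → ℝ)
    (N : ℕ) (st : ℕ → σ) (ac : ℕ → α) : Prop :=
  ∀ k, k < N → ac k ∈ act (st k) ∧ 0 < P (st k) (ac k) (st (k + 1))

/-- One step inside the sub-system `(R, B)`. -/
def stepIn {σ α : Type*} (act : σ → Finset α) (P : σ → α → σ → ℝ)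
    (R : Finset σ) (B : Finset α) (x y : σ) : Prop :=
  x ∈ R ∧ y ∈ R ∧ ∃ a ∈ B, a ∈ act x ∧ 0 < P x a y

/-- End component. -/
def IsEC {σ α : Type*} (act : σ → Finset α) (P : σ → α → σ → ℝ)
    (R : Finset σ) (B : Finset α) : Prop :=
  R.Nonempty ∧ B.Nonempty ∧
  (∀ a ∈ B, ∃ s ∈ R, a ∈ act s) ∧
  (∀ s ∈ R, ∀ a ∈ B, a ∈ act s → ∀ s', 0 < P s a s' → s' ∈ R) ∧
  (∀ s ∈ R, ∀ s' ∈ R, Relation.ReflTransGen (stepIn act P R B) s s')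

/-- Maximal end component. -/
def IsMEC {σ α : Type*} (act : σ → Finset α) (P : σ → α → σ → ℝ)
    (R : Finset σ) (B : Finset α) : Prop :=
  IsEC act P R B ∧
  ∀ R' B', IsEC act P R' B' → R ⊆ R' → B ⊆ B' → R = R' ∧ B = B'

/-- The state space of the collapsed MDP (before restricting to valid states):
original states, representative states `s_{(R_i,B_i)}` (one per collapsed EC), and
the two fresh states `s₊` (`Sum.inr true`) and `s₋` (`Sum.inr false`). -/
abbrev CS (S : Type) (n : ℕ) : Type := (S ⊕ Fin n) ⊕ Bool

/-- The action alphabet of the collapsed MDP: original actions, the `rem_i`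
actions (one per collapsed EC), and the self-loop actions `a₊` (`Sum.inr true`)
and `a₋` (`Sum.inr false`). -/
abbrev CA (A : Type) (n : ℕ) : Type := (A ⊕ Fin n) ⊕ Bool

variable {S A : Type} [Fintype S] [DecidableEq S] [Fintype A] [DecidableEq A] {n : ℕ}

/-- A collapsed state is valid if it is not an original state belonging to one of
the collapsed ECs. -/
def Valid (R : Fin n → Finset S) (x : CS S n) : Prop :=
  ∀ s : S, x = Sum.inl (Sum.inl s) → ∀ i, s ∉ R i

instance {R : Fin n → Finset S} : DecidablePred (Valid R) := fun x =>
  inferInstanceAs (Decidable (∀ s : S, x = Sum.inl (Sum.inl s) → ∀ i, s ∉ R i))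

/-- The state space `S^c` of the collapsed MDP. -/
abbrev CSv (R : Fin n → Finset S) : Type _ := {x : CS S n // Valid R x}

/-- `states(s^c)`: the set of original states represented by a collapsed state. -/
def statesOf (R : Fin n → Finset S) : CS S n → Finset S
  | Sum.inl (Sum.inl s) => {s}
  | Sum.inl (Sum.inr i) => R i
  | Sum.inr _ => ∅

/-- The map `collapsed : S → S^c`, sending a state to its representative if it
belongs to a collapsed EC and to itself otherwise. -/
noncomputable def collapseV (R : Fin n → Finset S) (s : S) : CSv R :=
  if h : ∃ i, s ∈ R i then
    ⟨Sum.inl (Sum.inr (Classical.choose h)), by intro t ht; simp at ht⟩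
  else
    ⟨Sum.inl (Sum.inl s), by
      intro t ht i hi
      simp only [Sum.inl.injEq] at ht
      subst ht
      exact h ⟨i, hi⟩⟩

/-- The terminal states `s₊ = term R true` and `s₋ = term R false` of the
collapsed MDP. -/
def term (R : Fin n → Finset S) (b : Bool) : CSv R :=
  ⟨Sum.inr b, by intro t ht; simp at ht⟩

/-- The representative state `s_{(R_i,B_i)}` of the `i`-th collapsed EC. -/
def repV (R : Fin n → Finset S) (i : Fin n) : CSv R :=
  ⟨Sum.inl (Sum.inr i), by intro t ht; simp at ht⟩

/-- The available actions `A^c` of the collapsed MDP. -/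
noncomputable def cAct (M : MDP S A) (R : Fin n → Finset S) (B : Fin n → Finset A) :
    CSv R → Finset (CA A n) := fun x =>
  match x.1 with
  | Sum.inl (Sum.inl s) => (M.act s).image fun a => Sum.inl (Sum.inl a)
  | Sum.inl (Sum.inr i) =>
      insert (Sum.inl (Sum.inr i))
        (((R i).biUnion M.act \ B i).image fun a => Sum.inl (Sum.inl a))
  | Sum.inr b => {Sum.inr b}

/-- The transition function `Δ^c` of the collapsed MDP: an original action keeps
its distribution (aggregated over the represented states), `rem_i` moves to `s₊`
or `s₋` according to whether the `i`-th EC contains a target state, and `a₊`, `a₋`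
are self-loops. -/
noncomputable def cP (M : MDP S A) (R : Fin n → Finset S) (T : Finset S) :
    CSv R → CA A n → CSv R → ℝ := fun _x a y =>
  match a with
  | Sum.inl (Sum.inl a₀) => ∑ s' ∈ statesOf R y.1, M.P (M.stOf a₀) a₀ s'
  | Sum.inl (Sum.inr i) =>
      if (R i ∩ T).Nonempty then (if y = term R true then 1 else 0)
      else (if y = term R false then 1 else 0)
  | Sum.inr b => if y = term R b then 1 else 0

/-!
Every action of `B^c` is an original action: `rem_i`, `a₊` and `a₋` move with positive
probability to `s₊` or `s₋`, which lie outside `R^c`. Closure under an original action of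
`B^c` holds because its collapsed distribution aggregates the original one over the
represented states, and closure under `B_i` is closure of `(R_i, B_i)`. A path in the
collapsed end component lifts step by step; inside a representative `s_{(R_i,B_i)}` the
gaps between the entry and exit states are bridged by the strong connectivity of
`(R_i, B_i)`.
-/

open Relation

theorem stepIn_mono {σ α : Type*} {act : σ → Finset α} {P : σ → α → σ → ℝ}
    {R R' : Finset σ} {B B' : Finset α} (hR : R ⊆ R') (hB : B ⊆ B') {x y : σ}
    (h : stepIn act P R B x y) : stepIn act P R' B' x y :=
  let ⟨hx, hy, a, ha, hax, hpos⟩ := h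
  ⟨hR hx, hR hy, a, hB ha, hax, hpos⟩

/-- `states(R^c)`. -/
def liftStates (R : Fin n → Finset S) (Rc : Finset (CSv R)) : Finset S :=
  Rc.biUnion fun x => statesOf R x.1

/-- `B^c ∪ ⋃_{s_{(R_i,B_i)} ∈ R^c} B_i`, with `B^c` read back as a set of original actions. -/
def liftActions (R : Fin n → Finset S) (B : Fin n → Finset A) (Rc : Finset (CSv R))
    (Bc : Finset (CA A n)) : Finset A :=
  (Finset.univ.filter fun a : A => (Sum.inl (Sum.inl a) : CA A n) ∈ Bc) ∪
    (Finset.univ.filter fun i : Fin n => repV R i ∈ Rc).biUnion B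

variable {M : MDP S A} {R : Fin n → Finset S} {B : Fin n → Finset A} {T : Finset S}
  {Rc : Finset (CSv R)} {Bc : Finset (CA A n)}

theorem mem_liftStates {s : S} : s ∈ liftStates R Rc ↔ ∃ x ∈ Rc, s ∈ statesOf R x.1 :=
  Finset.mem_biUnion

theorem statesOf_subset_liftStates {x : CSv R} (hx : x ∈ Rc) :
    statesOf R x.1 ⊆ liftStates R Rc :=
  Finset.subset_biUnion_of_mem (fun x : CSv R => statesOf R x.1) hx

theorem mem_liftActions {a : A} :
    a ∈ liftActions R B Rc Bc ↔
      (Sum.inl (Sum.inl a) : CA A n) ∈ Bc ∨ ∃ i, repV R i ∈ Rc ∧ a ∈ B i := by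
  simp [liftActions]

theorem subset_liftActions {i : Fin n} (hi : repV R i ∈ Rc) : B i ⊆ liftActions R B Rc Bc :=
  fun _ ha => mem_liftActions.2 (Or.inr ⟨i, hi, ha⟩)

theorem mem_statesOf_collapseV (s : S) : s ∈ statesOf R (collapseV R s).1 := by
  unfold collapseV
  split
  · next h => simpa [statesOf] using Classical.choose_spec h
  · simp [statesOf]

theorem exists_mem_statesOf_of_mem_cAct {x : CSv R} {a : A}
    (h : (Sum.inl (Sum.inl a) : CA A n) ∈ cAct M R B x) : ∃ u ∈ statesOf R x.1, a ∈ M.act u := by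
  obtain ⟨(u | i) | b, hv⟩ := x
  · simp only [cAct, Finset.mem_image, Sum.inl.injEq, exists_eq_right] at h
    exact ⟨u, Finset.mem_singleton_self u, h⟩
  · simp only [cAct, Finset.mem_insert, Finset.mem_image, Finset.mem_sdiff, Finset.mem_biUnion,
      Sum.inl.injEq, reduceCtorEq, exists_eq_right, false_or] at h
    exact h.1
  · simp [cAct] at h

theorem mem_cAct_of_mem_act {x : CSv R} {s : S} {a : A} (hs : s ∈ statesOf R x.1)
    (ha : a ∈ M.act s) (hB : ∀ i, x = repV R i → a ∉ B i) :
    (Sum.inl (Sum.inl a) : CA A n) ∈ cAct M R B x := by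
  obtain ⟨(u | i) | b, hv⟩ := x
  · rw [statesOf, Finset.mem_singleton] at hs
    subst hs
    exact Finset.mem_image_of_mem _ ha
  · exact Finset.mem_insert_of_mem <| Finset.mem_image_of_mem _ <|
      Finset.mem_sdiff.2 ⟨Finset.mem_biUnion.2 ⟨s, hs, ha⟩, hB i rfl⟩
  · simp [statesOf] at hs

theorem cP_inl_pos_iff {x y : CSv R} {a : A} :
    0 < cP M R T x (Sum.inl (Sum.inl a)) y ↔ ∃ t ∈ statesOf R y.1, 0 < M.P (M.stOf a) a t :=
  Finset.sum_pos_iff_of_nonneg fun _ _ => M.P_nonneg _ _ _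

theorem exists_cP_term_pos (x : CSv R) {ac : CA A n} (h : ∀ a : A, ac ≠ Sum.inl (Sum.inl a)) :
    ∃ b, 0 < cP M R T x ac (term R b) := by
  rcases ac with (a | i) | b
  · exact absurd rfl (h a)
  · by_cases hT : (R i ∩ T).Nonempty
    · exact ⟨true, by simp [cP, hT]⟩
    · exact ⟨false, by simp [cP, hT]⟩
  · exact ⟨b, by simp [cP]⟩

theorem exists_eq_inl_inl_of_mem (hECc : IsEC (cAct M R B) (cP M R T) Rc Bc)
    (hterm : ∀ b, term R b ∉ Rc) {ac : CA A n} (hac : ac ∈ Bc) :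
    ∃ a : A, ac = Sum.inl (Sum.inl a) := by
  by_contra! h
  obtain ⟨x, hx, hax⟩ := hECc.2.2.1 ac hac
  obtain ⟨b, hb⟩ := exists_cP_term_pos (M := M) (T := T) x h
  exact hterm b (hECc.2.2.2.1 x hx ac hac hax _ hb)

theorem statesOf_nonempty (hR : ∀ i, (R i).Nonempty) (hterm : ∀ b, term R b ∉ Rc)
    {x : CSv R} (hx : x ∈ Rc) : (statesOf R x.1).Nonempty := by
  obtain ⟨(u | i) | b, hv⟩ := x
  · exact Finset.singleton_nonempty u
  · exact hR i
  · exact absurd hx (hterm b)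

theorem liftStates_nonempty (hR : ∀ i, (R i).Nonempty) (hterm : ∀ b, term R b ∉ Rc)
    (hRc : Rc.Nonempty) : (liftStates R Rc).Nonempty :=
  let ⟨_, hx⟩ := hRc
  (statesOf_nonempty hR hterm hx).mono (statesOf_subset_liftStates hx)

theorem liftActions_nonempty (hECc : IsEC (cAct M R B) (cP M R T) Rc Bc)
    (hterm : ∀ b, term R b ∉ Rc) : (liftActions R B Rc Bc).Nonempty := by
  obtain ⟨ac, hac⟩ := hECc.2.1
  obtain ⟨a, rfl⟩ := exists_eq_inl_inl_of_mem hECc hterm hac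
  exact ⟨a, mem_liftActions.2 (Or.inl hac)⟩

theorem exists_mem_liftStates_mem_act (hEC : ∀ i, IsEC M.act M.P (R i) (B i))
    (hECc : IsEC (cAct M R B) (cP M R T) Rc Bc) :
    ∀ a ∈ liftActions R B Rc Bc, ∃ s ∈ liftStates R Rc, a ∈ M.act s := by
  intro a ha
  rcases mem_liftActions.1 ha with haBc | ⟨i, hi, hai⟩
  · obtain ⟨x, hx, hax⟩ := hECc.2.2.1 _ haBc
    obtain ⟨u, hu, hau⟩ := exists_mem_statesOf_of_mem_cAct hax
    exact ⟨u, statesOf_subset_liftStates hx hu, hau⟩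
  · obtain ⟨s, hs, has⟩ := (hEC i).2.2.1 a hai
    exact ⟨s, statesOf_subset_liftStates hi hs, has⟩

theorem mem_liftStates_of_pos (hECc : IsEC (cAct M R B) (cP M R T) Rc Bc) {x : CSv R}
    (hx : x ∈ Rc) {a : A} (haBc : (Sum.inl (Sum.inl a) : CA A n) ∈ Bc)
    (hax : (Sum.inl (Sum.inl a) : CA A n) ∈ cAct M R B x) {s' : S}
    (hpos : 0 < M.P (M.stOf a) a s') : s' ∈ liftStates R Rc := by
  have hy : collapseV R s' ∈ Rc :=
    hECc.2.2.2.1 x hx _ haBc hax _ (cP_inl_pos_iff.2 ⟨s', mem_statesOf_collapseV s', hpos⟩)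
  exact statesOf_subset_liftStates hy (mem_statesOf_collapseV s')

theorem liftStates_closed (hEC : ∀ i, IsEC M.act M.P (R i) (B i))
    (hECc : IsEC (cAct M R B) (cP M R T) Rc Bc) :
    ∀ s ∈ liftStates R Rc, ∀ a ∈ liftActions R B Rc Bc, a ∈ M.act s →
      ∀ s', 0 < M.P s a s' → s' ∈ liftStates R Rc := by
  intro s hs a ha has s' hpos
  by_cases hB : ∃ i, repV R i ∈ Rc ∧ s ∈ R i ∧ a ∈ B i
  · obtain ⟨i, hi, hsi, hai⟩ := hB
    exact statesOf_subset_liftStates hi ((hEC i).2.2.2.1 s hsi a hai has s' hpos)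
  push Not at hB
  have haBc : (Sum.inl (Sum.inl a) : CA A n) ∈ Bc := by
    refine (mem_liftActions.1 ha).resolve_right ?_
    rintro ⟨i, hi, hai⟩
    obtain ⟨t, ht, hat⟩ := (hEC i).2.2.1 a hai
    have hst : s = t := (M.stOf_spec s a has).symm.trans (M.stOf_spec t a hat)
    exact hB i hi (hst ▸ ht) hai
  obtain ⟨x, hx, hsx⟩ := mem_liftStates.1 hs
  have hax : (Sum.inl (Sum.inl a) : CA A n) ∈ cAct M R B x :=
    mem_cAct_of_mem_act hsx has fun i hxi => hB i (hxi ▸ hx) (by subst hxi; exact hsx)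
  exact mem_liftStates_of_pos hECc hx haBc hax (M.stOf_spec s a has ▸ hpos)

theorem reflTransGen_of_mem_statesOf (hEC : ∀ i, IsEC M.act M.P (R i) (B i)) {x : CSv R}
    (hx : x ∈ Rc) {s t : S} (hs : s ∈ statesOf R x.1) (ht : t ∈ statesOf R x.1) :
    ReflTransGen (stepIn M.act M.P (liftStates R Rc) (liftActions R B Rc Bc)) s t := by
  obtain ⟨(u | i) | b, hv⟩ := x
  · rw [statesOf, Finset.mem_singleton] at hs ht
    exact hs ▸ ht ▸ ReflTransGen.refl
  · exact ReflTransGen.mono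
      (fun _ _ => stepIn_mono (statesOf_subset_liftStates hx) (subset_liftActions hx))
      _ _ ((hEC i).2.2.2.2 s hs t ht)
  · simp [statesOf] at hs

theorem reflTransGen_of_stepIn (hEC : ∀ i, IsEC M.act M.P (R i) (B i))
    (hECc : IsEC (cAct M R B) (cP M R T) Rc Bc) (hterm : ∀ b, term R b ∉ Rc) {x y : CSv R}
    (hxy : stepIn (cAct M R B) (cP M R T) Rc Bc x y) {s t : S} (hs : s ∈ statesOf R x.1)
    (ht : t ∈ statesOf R y.1) :
    ReflTransGen (stepIn M.act M.P (liftStates R Rc) (liftActions R B Rc Bc)) s t := by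
  obtain ⟨hx, hy, ac, hac, hacx, hpos⟩ := hxy
  obtain ⟨a, rfl⟩ := exists_eq_inl_inl_of_mem hECc hterm hac
  obtain ⟨u, hu, hau⟩ := exists_mem_statesOf_of_mem_cAct hacx
  obtain ⟨t', ht', hpos'⟩ := cP_inl_pos_iff.1 hpos
  have hstep : stepIn M.act M.P (liftStates R Rc) (liftActions R B Rc Bc) u t' :=
    ⟨statesOf_subset_liftStates hx hu, statesOf_subset_liftStates hy ht', a,
      mem_liftActions.2 (Or.inl hac), hau, M.stOf_spec u a hau ▸ hpos'⟩
  exact ((reflTransGen_of_mem_statesOf hEC hx hs hu).tail hstep).trans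
    (reflTransGen_of_mem_statesOf hEC hy ht' ht)

theorem liftStates_connected (hEC : ∀ i, IsEC M.act M.P (R i) (B i))
    (hECc : IsEC (cAct M R B) (cP M R T) Rc Bc) (hterm : ∀ b, term R b ∉ Rc) :
    ∀ s ∈ liftStates R Rc, ∀ t ∈ liftStates R Rc,
      ReflTransGen (stepIn M.act M.P (liftStates R Rc) (liftActions R B Rc Bc)) s t := by
  intro s hs t ht
  obtain ⟨x, hx, hsx⟩ := mem_liftStates.1 hs
  obtain ⟨y, hy, hty⟩ := mem_liftStates.1 ht
  induction hECc.2.2.2.2 x hx y hy generalizing t with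
  | refl => exact reflTransGen_of_mem_statesOf hEC hx hsx hty
  | @tail z y _ hzy ih =>
    obtain ⟨u, hu⟩ := statesOf_nonempty (fun i => (hEC i).1) hterm hzy.1
    exact (ih u (statesOf_subset_liftStates hzy.1 hu) hzy.1 hu).trans
      (reflTransGen_of_stepIn hEC hECc hterm hzy hu hty)

theorem ec_correspondence_collapse_to_normal_general (M : MDP S A) (n : ℕ) (R : Fin n → Finset S) (B : Fin n → Finset A)
    (hEC : ∀ i, IsEC M.act M.P (R i) (B i))
    (T : Finset S)
    (Mc : MDP (CSv R) (CA A n))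
    (Hact : ∀ x, Mc.act x = cAct M R B x)
    (HP : ∀ x a y, Mc.P x a y = cP M R T x a y)
    (Rc : Finset (CSv R)) (Bc : Finset (CA A n))
    (hECc : IsEC Mc.act Mc.P Rc Bc)
    (hnoterm : ∀ b : Bool, term R b ∉ Rc) :
    IsEC M.act M.P
      (Rc.biUnion fun x => statesOf R x.1)
      ((Finset.univ.filter fun a : A => (Sum.inl (Sum.inl a) : CA A n) ∈ Bc) ∪
        (Finset.univ.filter fun i : Fin n => repV R i ∈ Rc).biUnion B) := by
  have hact : Mc.act = cAct M R B := funext Hact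
  have hP : Mc.P = cP M R T := funext fun x => funext fun a => funext (HP x a)
  rw [hact, hP] at hECc
  show IsEC M.act M.P (liftStates R Rc) (liftActions R B Rc Bc)
  exact ⟨liftStates_nonempty (fun i => (hEC i).1) hnoterm hECc.1,
    liftActions_nonempty hECc hnoterm, exists_mem_liftStates_mem_act hEC hECc,
    liftStates_closed hEC hECc, liftStates_connected hEC hECc hnoterm⟩

/-- EC correspondence from the collapsed MDP `M^c` back to `M`. -/
theorem ec_correspondence_collapse_to_normal (M : MDP S A) (n : ℕ) (R : Fin n → Finset S) (B : Fin n → Finset A)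
    (hEC : ∀ i, IsEC M.act M.P (R i) (B i))
    (hdisj : ∀ i j, i ≠ j → Disjoint (R i) (R j))
    (T : Finset S)
    (Mc : MDP (CSv R) (CA A n))
    (Hact : ∀ x, Mc.act x = cAct M R B x)
    (HP : ∀ x a y, Mc.P x a y = cP M R T x a y)
    (Rc : Finset (CSv R)) (Bc : Finset (CA A n))
    (hECc : IsEC Mc.act Mc.P Rc Bc)
    (hnoterm : ∀ b : Bool, term R b ∉ Rc) :
    IsEC M.act M.P
      (Rc.biUnion fun x => statesOf R x.1)
      ((Finset.univ.filter fun a : A => (Sum.inl (Sum.inl a) : CA A n) ∈ Bc) ∪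
        (Finset.univ.filter fun i : Fin n => repV R i ∈ Rc).biUnion B) :=
  ec_correspondence_collapse_to_normal_general M n R B hEC T Mc Hact HP Rc Bc hECc hnoterm
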